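/- Let p be Vigoda's flip parameters and m ≥ 2 a natural number. For any natural numbers 0 ≤ b₁ ≤ b₂ ≤ ⋯ ≤ b_m ≤ 6 with b_m > 0 and B = Σ_i b_i, we have (B - b_m)·p_B + Σ_{i=1}^{m-1} b_i·p_{b_i} ≤ -1 + (11/6)·m. -/
import Mathlib


def vigodaP : ℕ → ℚ
  | 0 => 0
  | 1 => 1
  | 2 => 13/42
  | 3 => 1/6
  | 4 => 2/21
  | 5 => 1/21
  | 6 => 1/84
  | _ => 0

lemma vigodaP_nonneg (k : ℕ) : 0 ≤ vigodaP k := by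
  match k with
  | 0 | 1 | 2 | 3 | 4 | 5 | 6 => norm_num [vigodaP]
  | (n+7) => simp [vigodaP]

lemma vigodaP_key (k : ℕ) : (k : ℚ) * vigodaP k ≤ 1 := by
  match k with
  | 0 | 1 | 2 | 3 | 4 | 5 | 6 => norm_num [vigodaP]
  | (n+7) =>
    have : vigodaP (n+7) = 0 := by simp [vigodaP]
    rw [this, mul_zero]; norm_num

theorem stmt_15 (m : ℕ) (hm : 2 ≤ m) (b : ℕ → ℕ)
    (hmono : ∀ i j, 1 ≤ i → i ≤ j → j ≤ m → b i ≤ b j)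
    (hle : ∀ i, 1 ≤ i → i ≤ m → b i ≤ 6)
    (hbm : 0 < b m)
    (B : ℕ) (hB : B = ∑ i ∈ Finset.Icc 1 m, b i) :
    ((B : ℚ) - (b m : ℚ)) * vigodaP B +
      ∑ i ∈ Finset.Icc 1 (m - 1), (b i : ℚ) * vigodaP (b i) ≤ -1 + (11/6) * m := by
  have h1 : ((B : ℚ) - (b m : ℚ)) * vigodaP B ≤ 1 := by
    calc ((B : ℚ) - (b m : ℚ)) * vigodaP B ≤ (B : ℚ) * vigodaP B := by
          apply mul_le_mul_of_nonneg_right _ (vigodaP_nonneg B)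
          have : (0:ℚ) ≤ (b m : ℚ) := Nat.cast_nonneg _
          linarith
      _ ≤ 1 := vigodaP_key B
  have h2 : ∑ i ∈ Finset.Icc 1 (m - 1), (b i : ℚ) * vigodaP (b i) ≤ (m - 1 : ℕ) := by
    calc ∑ i ∈ Finset.Icc 1 (m - 1), (b i : ℚ) * vigodaP (b i)
        ≤ ∑ i ∈ Finset.Icc 1 (m - 1), (1:ℚ) :=
          Finset.sum_le_sum (fun i _ => vigodaP_key (b i))
      _ = (m - 1 : ℕ) := by simp [Nat.card_Icc]
  have hm' : (2:ℚ) ≤ (m:ℚ) := by exact_mod_cast hm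
  have hcast : ((m - 1 : ℕ) : ℚ) = (m:ℚ) - 1 := by
    have : 1 ≤ m := le_trans (by norm_num) hm
    push_cast [this]; ring
  rw [hcast] at h2
  linarith
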